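/- arXiv:1305.6130 — 3 statements merged into one kernel-verified Lean document; each statement's English description precedes it below -/
import Mathlib

section
/- Let S_a ⊂ [0,1]^n be the modified Sierpinski carpet obtained by, at stage m, subdividing each remaining cube into a_m^{-n} congruent closed subcubes (where a_m is the reciprocal of an odd integer greater than 1) and removing the interior of the central one. Then the n-dimensional Lebesgue measure of S_a equals lim_{m→∞} (1-a_1^n)⋯(1-a_m^n), and this measure is positive if and only if the sequence (a_m) belongs to ℓ^n, i.e., ∑_m a_m^n < ∞. -/
open MeasureTheory Filter Set

/-- The closed subcube with index `v` of the cube with lower corner `c` and side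
length `s`, after subdivision into `k^n` congruent subcubes. -/
def subCube {n : ℕ} (c : Fin n → ℝ) (s : ℝ) (k : ℕ) (v : Fin n → Fin k) :
    Set (Fin n → ℝ) :=
  Set.Icc (fun i => c i + (v i : ℝ) * (s / k)) (fun i => c i + (v i : ℝ) * (s / k) + s / k)

/-- The (lower corner, side length) data of the cubes remaining at stage `m` of the
construction of the modified Sierpinski carpet in `[0,1]^n`, where at stage `m+1`
each remaining cube is subdivided into `(2 * b m + 1)^n` congruent closed subcubes
(so `a m = 1 / (2 * b m + 1)` is the reciprocal of an odd integer) and the central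
one (of index `fun _ => b m`) is removed. -/
def carpetPieces (n : ℕ) (b : ℕ → ℕ) : ℕ → Set ((Fin n → ℝ) × ℝ)
  | 0 => {(fun _ => (0 : ℝ), (1 : ℝ))}
  | m + 1 => ⋃ p ∈ carpetPieces n b m,
      { q | ∃ v : Fin n → Fin (2 * b m + 1),
          v ≠ (fun _ => ⟨b m, by omega⟩) ∧
          q = (fun i => p.1 i + (v i : ℝ) * (p.2 / (2 * b m + 1)), p.2 / (2 * b m + 1)) }

/-- The level-`m` precarpet: the union of the cubes remaining at stage `m`. -/
def precarpet (n : ℕ) (b : ℕ → ℕ) (m : ℕ) : Set (Fin n → ℝ) :=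
  ⋃ p ∈ carpetPieces n b m, Set.Icc p.1 (fun i => p.1 i + p.2)

/-- The modified Sierpinski carpet `S_a` with `a m = 1 / (2 * b m + 1)`. -/
def sierpinskiCarpet (n : ℕ) (b : ℕ → ℕ) : Set (Fin n → ℝ) :=
  ⋂ m, precarpet n b m

open Topology

/-! Passing from stage `m` to stage `m + 1` replaces every remaining cube by all but the central
one of `(2 b_m + 1)^n` a.e.-disjoint subcubes, which multiplies the volume by `1 - a_m^n`; the
volume of the carpet is the limit of these products by continuity of the measure along the
decreasing precarpets. As `0 ≤ a_m^n < 1`, the products have a positive limit iff `∑ a_m^n < ∞`: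
`1 - x ≤ exp (-x)` sends them to `0` when the series diverges, and a convergent series gives a
convergent infinite product of nonzero factors, which is nonzero. -/

section InfiniteProducts

theorem tendsto_prod_range_one_sub_of_not_summable {x : ℕ → ℝ} (hx0 : ∀ j, 0 ≤ x j)
    (hx1 : ∀ j, x j ≤ 1) (hx : ¬Summable x) :
    Tendsto (fun m => ∏ j ∈ Finset.range m, (1 - x j)) atTop (𝓝 0) := by
  have hexp : Tendsto (fun m => Real.exp (-∑ j ∈ Finset.range m, x j)) atTop (𝓝 0) :=
    Real.tendsto_exp_atBot.comp <| tendsto_neg_atTop_atBot.comp <|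
      (not_summable_iff_tendsto_nat_atTop_of_nonneg hx0).mp hx
  refine squeeze_zero (fun m => Finset.prod_nonneg fun j _ => sub_nonneg.mpr (hx1 j))
    (fun m => ?_) hexp
  rw [← Finset.sum_neg_distrib, Real.exp_sum]
  exact Finset.prod_le_prod (fun j _ => sub_nonneg.mpr (hx1 j))
    fun j _ => Real.one_sub_le_exp_neg (x j)

theorem tendsto_prod_range_one_sub_of_summable {x : ℕ → ℝ} (hx : Summable x) :
    Tendsto (fun m => ∏ j ∈ Finset.range m, (1 - x j)) atTop (𝓝 (∏' j, (1 - x j))) := by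
  simp_rw [sub_eq_add_neg]
  exact (multipliable_one_add_of_summable hx.neg.norm).tendsto_prod_tprod_nat

theorem pos_iff_summable_of_tendsto_prod_range_one_sub {x : ℕ → ℝ} {L : ℝ}
    (hx0 : ∀ j, 0 ≤ x j) (hx1 : ∀ j, x j < 1)
    (hL : Tendsto (fun m => ∏ j ∈ Finset.range m, (1 - x j)) atTop (𝓝 L)) :
    0 < L ↔ Summable x := by
  constructor
  · intro hpos
    by_contra hx
    exact hpos.ne' <| tendsto_nhds_unique hL <|
      tendsto_prod_range_one_sub_of_not_summable hx0 (fun j => (hx1 j).le) hx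
  · intro hx
    have hL0 : 0 ≤ L := ge_of_tendsto' hL fun m =>
      Finset.prod_nonneg fun j _ => sub_nonneg.mpr (hx1 j).le
    refine hL0.lt_of_ne' ?_
    rw [tendsto_nhds_unique hL (tendsto_prod_range_one_sub_of_summable hx)]
    simp_rw [sub_eq_add_neg]
    exact tprod_one_add_ne_zero_of_summable (fun j => by linarith [hx1 j]) hx.neg.norm

end InfiniteProducts

section Cubes

theorem one_sub_inv_natCast_pow_nonneg (k n : ℕ) : 0 ≤ 1 - (k : ℝ)⁻¹ ^ n :=
  sub_nonneg.mpr (pow_le_one₀ (by positivity) (Nat.cast_inv_le_one k))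

variable {n : ℕ}

theorem volume_Icc_add_const (c : Fin n → ℝ) {s : ℝ} (hs : 0 ≤ s) :
    volume (Icc c (fun i => c i + s)) = ENNReal.ofReal (s ^ n) := by
  simp [Real.volume_Icc_pi, ENNReal.ofReal_pow hs]

variable {c : Fin n → ℝ} {s : ℝ} {k : ℕ}

theorem volume_subCube (hs : 0 ≤ s) (v : Fin n → Fin k) :
    volume (subCube c s k v) = ENNReal.ofReal ((s / k) ^ n) :=
  volume_Icc_add_const _ (by positivity)

theorem subCube_subset_Icc (hs : 0 ≤ s) (v : Fin n → Fin k) :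
    subCube c s k v ⊆ Icc c (fun i => c i + s) := by
  refine Icc_subset_Icc (fun i => ?_) (fun i => ?_)
  · have : 0 ≤ (v i : ℝ) * (s / k) := by positivity
    simpa using this
  · have hk : (0 : ℝ) < k := by exact_mod_cast Fin.pos (v i)
    have hvk : (v i : ℝ) + 1 ≤ k := by exact_mod_cast (v i).isLt
    calc c i + (v i : ℝ) * (s / k) + s / k = c i + ((v i : ℝ) + 1) * (s / k) := by ring
      _ ≤ c i + k * (s / k) := by gcongr
      _ = c i + s := by field_simp

theorem aedisjoint_subCube_of_lt (hs : 0 ≤ s) {v w : Fin n → Fin k} {i : Fin n}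
    (h : v i < w i) : AEDisjoint volume (subCube c s k v) (subCube c s k w) := by
  have hvw : ((v i : ℕ) : ℝ) + 1 ≤ w i := by exact_mod_cast h
  rw [AEDisjoint, subCube, subCube, Icc_inter_Icc, Real.volume_Icc_pi]
  refine Finset.prod_eq_zero (Finset.mem_univ i) (ENNReal.ofReal_eq_zero.mpr ?_)
  have hsk : 0 ≤ s / k := by positivity
  simp only [Pi.inf_apply, Pi.sup_apply, sub_nonpos]
  calc _ ≤ c i + (v i : ℝ) * (s / k) + s / k := min_le_left _ _
    _ ≤ c i + (w i : ℝ) * (s / k) := by nlinarith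
    _ ≤ _ := le_max_right _ _

theorem aedisjoint_subCube (hs : 0 ≤ s) {v w : Fin n → Fin k} (hvw : v ≠ w) :
    AEDisjoint volume (subCube c s k v) (subCube c s k w) := by
  obtain ⟨i, hi⟩ := Function.ne_iff.mp hvw
  rcases hi.lt_or_gt with h | h
  · exact aedisjoint_subCube_of_lt hs h
  · exact (aedisjoint_subCube_of_lt hs h).symm

theorem biUnion_subCube_subset_Icc (hs : 0 ≤ s) (V : Finset (Fin n → Fin k)) :
    ⋃ v ∈ V, subCube c s k v ⊆ Icc c (fun i => c i + s) :=
  iUnion₂_subset fun v _ => subCube_subset_Icc hs v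

theorem volume_biUnion_subCube_erase (hs : 0 ≤ s) (hk : 0 < k) (w : Fin n → Fin k) :
    volume (⋃ v ∈ Finset.univ.erase w, subCube c s k v) =
      ENNReal.ofReal (1 - (k : ℝ)⁻¹ ^ n) * volume (Icc c (fun i => c i + s)) := by
  rw [measure_biUnion_finset₀ (fun v _ w _ hvw => aedisjoint_subCube hs hvw)
      (fun v _ => measurableSet_Icc.nullMeasurableSet),
    Finset.sum_congr rfl fun v _ => volume_subCube hs v, Finset.sum_const,
    Finset.card_erase_of_mem (Finset.mem_univ w), Finset.card_univ, Fintype.card_fun,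
    Fintype.card_fin, Fintype.card_fin, volume_Icc_add_const c hs, nsmul_eq_mul,
    ← ENNReal.ofReal_natCast, ← ENNReal.ofReal_mul (Nat.cast_nonneg _),
    ← ENNReal.ofReal_mul (one_sub_inv_natCast_pow_nonneg k n)]
  congr 1
  have hk' : (k : ℝ) ≠ 0 := by positivity
  rw [Nat.cast_sub (Nat.one_le_pow _ _ hk)]
  push_cast
  rw [div_pow, inv_pow]
  field_simp

end Cubes

section Carpet

open Function

variable {n : ℕ}

abbrev pieceCube (p : (Fin n → ℝ) × ℝ) : Set (Fin n → ℝ) :=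
  Icc p.1 (fun i => p.1 i + p.2)

noncomputable def subPiece (p : (Fin n → ℝ) × ℝ) (k : ℕ) (v : Fin n → Fin k) :
    (Fin n → ℝ) × ℝ :=
  (fun i => p.1 i + (v i : ℝ) * (p.2 / k), p.2 / k)

def carpetCenter (n : ℕ) (b : ℕ → ℕ) (m : ℕ) : Fin n → Fin (2 * b m + 1) :=
  fun _ => ⟨b m, by omega⟩

variable {b : ℕ → ℕ} {m : ℕ}

theorem mem_carpetPieces_succ {q : (Fin n → ℝ) × ℝ} :
    q ∈ carpetPieces n b (m + 1) ↔
      ∃ p ∈ carpetPieces n b m, ∃ v ≠ carpetCenter n b m, q = subPiece p (2 * b m + 1) v := by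
  simp only [carpetPieces, mem_iUnion, mem_ofPred_eq, exists_prop, subPiece]
  push_cast
  rfl

theorem finite_carpetPieces (n : ℕ) (b : ℕ → ℕ) : ∀ m, (carpetPieces n b m).Finite
  | 0 => finite_singleton _
  | m + 1 => by
    refine ((finite_carpetPieces n b m).biUnion fun p _ =>
      finite_range (subPiece p (2 * b m + 1))).subset fun q hq => ?_
    obtain ⟨p, hp, v, -, rfl⟩ := mem_carpetPieces_succ.mp hq
    exact mem_biUnion hp (mem_range_self v)

theorem side_nonneg_of_mem_carpetPieces {p : (Fin n → ℝ) × ℝ} (hp : p ∈ carpetPieces n b m) :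
    0 ≤ p.2 := by
  induction m generalizing p with
  | zero => simp_all [carpetPieces]
  | succ m ih =>
    obtain ⟨p', hp', v, -, rfl⟩ := mem_carpetPieces_succ.mp hp
    exact div_nonneg (ih hp') (Nat.cast_nonneg _)

theorem pairwise_aedisjoint_carpetPieces (n : ℕ) (b : ℕ → ℕ) (m : ℕ) :
    (carpetPieces n b m).Pairwise (AEDisjoint volume on pieceCube) := by
  induction m with
  | zero => simp [carpetPieces]
  | succ m ih =>
    intro q hq q' hq' hne
    obtain ⟨p, hp, v, -, rfl⟩ := mem_carpetPieces_succ.mp hq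
    obtain ⟨p', hp', v', -, rfl⟩ := mem_carpetPieces_succ.mp hq'
    have hs := side_nonneg_of_mem_carpetPieces hp
    by_cases hpp : p = p'
    · subst hpp
      exact aedisjoint_subCube hs fun hvv => hne (hvv ▸ rfl)
    · exact (ih hp hp' hpp).mono (subCube_subset_Icc hs v)
        (subCube_subset_Icc (side_nonneg_of_mem_carpetPieces hp') v')

theorem precarpet_succ (n : ℕ) (b : ℕ → ℕ) (m : ℕ) :
    precarpet n b (m + 1) = ⋃ p ∈ carpetPieces n b m,
      ⋃ v ∈ Finset.univ.erase (carpetCenter n b m), subCube p.1 p.2 (2 * b m + 1) v := by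
  ext x
  simp only [precarpet, mem_iUnion, exists_prop, mem_carpetPieces_succ, Finset.mem_erase,
    Finset.mem_univ, and_true]
  constructor
  · rintro ⟨_, ⟨p, hp, v, hv, rfl⟩, hx⟩
    exact ⟨p, hp, v, hv, hx⟩
  · rintro ⟨p, hp, v, hv, hx⟩
    exact ⟨_, ⟨p, hp, v, hv, rfl⟩, hx⟩

theorem antitone_precarpet (n : ℕ) (b : ℕ → ℕ) : Antitone (precarpet n b) := by
  refine antitone_nat_of_succ_le fun m => ?_
  rw [precarpet_succ]
  exact biUnion_mono subset_rfl fun p hp =>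
    biUnion_subCube_subset_Icc (side_nonneg_of_mem_carpetPieces hp) _

theorem measurableSet_precarpet (n : ℕ) (b : ℕ → ℕ) (m : ℕ) :
    MeasurableSet (precarpet n b m) :=
  (finite_carpetPieces n b m).measurableSet_biUnion fun _ _ => measurableSet_Icc

theorem volume_precarpet_succ (n : ℕ) (b : ℕ → ℕ) (m : ℕ) :
    volume (precarpet n b (m + 1)) =
      ENNReal.ofReal (1 - ((2 * b m + 1 : ℕ) : ℝ)⁻¹ ^ n) * volume (precarpet n b m) := by
  have hP := finite_carpetPieces n b m
  have hd := pairwise_aedisjoint_carpetPieces n b m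
  rw [precarpet_succ, precarpet, ← hP.coe_toFinset, Finset.set_biUnion_coe,
    Finset.set_biUnion_coe, measure_biUnion_finset₀, measure_biUnion_finset₀, Finset.mul_sum]
  · exact Finset.sum_congr rfl fun p hp => volume_biUnion_subCube_erase
      (side_nonneg_of_mem_carpetPieces (hP.mem_toFinset.mp hp)) (by omega) _
  · rwa [hP.coe_toFinset]
  · exact fun _ _ => measurableSet_Icc.nullMeasurableSet
  · rw [hP.coe_toFinset]
    intro p hp q hq hpq
    exact (hd hp hq hpq).mono (biUnion_subCube_subset_Icc (side_nonneg_of_mem_carpetPieces hp) _)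
      (biUnion_subCube_subset_Icc (side_nonneg_of_mem_carpetPieces hq) _)
  · exact fun _ _ =>
      (Finset.measurableSet_biUnion _ fun _ _ => measurableSet_Icc).nullMeasurableSet

theorem volume_precarpet (n : ℕ) (b : ℕ → ℕ) (m : ℕ) :
    volume (precarpet n b m) =
      ENNReal.ofReal (∏ j ∈ Finset.range m, (1 - ((2 * b j + 1 : ℕ) : ℝ)⁻¹ ^ n)) := by
  induction m with
  | zero =>
    simpa [precarpet, carpetPieces] using volume_Icc_add_const (fun _ => (0 : ℝ)) zero_le_one
  | succ m ih =>
    rw [volume_precarpet_succ, ih, ← ENNReal.ofReal_mul (one_sub_inv_natCast_pow_nonneg _ n),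
      Finset.prod_range_succ, mul_comm]

theorem tendsto_volume_precarpet (n : ℕ) (b : ℕ → ℕ) :
    Tendsto (fun m => volume (precarpet n b m)) atTop (𝓝 (volume (sierpinskiCarpet n b))) :=
  tendsto_measure_iInter_atTop (fun m => (measurableSet_precarpet n b m).nullMeasurableSet)
    (antitone_precarpet n b) ⟨0, by simp [volume_precarpet]⟩

end Carpet

/-- The `n`-dimensional Lebesgue measure of the modified Sierpinski carpet equals
`lim_{m → ∞} (1 - a 0 ^ n) ⋯ (1 - a (m-1) ^ n)` where `a m = 1/(2 * b m + 1)`, and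
this measure is positive if and only if `(a m) ∈ ℓ^n`, i.e. `∑ m, a m ^ n < ∞`. -/
theorem sierpinskiCarpet_volume (n : ℕ) (hn : 1 ≤ n) (b : ℕ → ℕ) (hb : ∀ m, 1 ≤ b m)
    (a : ℕ → ℝ) (hab : ∀ m, a m = ((2 * b m + 1 : ℕ) : ℝ)⁻¹) :
    Filter.Tendsto (fun m => ∏ j ∈ Finset.range m, (1 - a j ^ n)) Filter.atTop
      (nhds (volume (sierpinskiCarpet n b)).toReal) ∧
    (0 < volume (sierpinskiCarpet n b) ↔ Summable (fun m => a m ^ n)) := by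
  have hfinite : volume (sierpinskiCarpet n b) ≠ ⊤ :=
    ((measure_mono (iInter_subset _ 0)).trans_lt (by simp [volume_precarpet])).ne
  have hlim : Tendsto (fun m => ∏ j ∈ Finset.range m, (1 - a j ^ n)) atTop
      (𝓝 (volume (sierpinskiCarpet n b)).toReal) := by
    refine ((ENNReal.tendsto_toReal hfinite).comp (tendsto_volume_precarpet n b)).congr
      fun m => ?_
    rw [Function.comp_apply, volume_precarpet, ENNReal.toReal_ofReal
      (Finset.prod_nonneg fun j _ => one_sub_inv_natCast_pow_nonneg _ n)]
    simp only [hab]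
  have ha_nonneg : ∀ j, 0 ≤ a j ^ n := fun j => by rw [hab]; positivity
  have ha_lt_one : ∀ j, a j ^ n < 1 := fun j => by
    rw [hab]
    exact pow_lt_one₀ (by positivity) (inv_lt_one_of_one_lt₀ (by have := hb j; norm_cast; omega))
      (by omega)
  refine ⟨hlim, ?_⟩
  rw [← pos_iff_summable_of_tendsto_prod_range_one_sub ha_nonneg ha_lt_one hlim,
    ENNReal.toReal_pos_iff, and_iff_left hfinite.lt_top]
end

section
/- Let (X,d) be a geodesic metric space, U ⊂ X bounded open, and u: closure(U) → ℝ continuous and Lipschitz on U. Suppose that sup_{x∈V} Lip_d u(x) ≤ Lip_d(u, ∂V) for every open V compactly contained in U (this holds for absolute minimizers). Then for every open V compactly contained in U, Lip_d(u, V) = Lip_d(u, ∂V). -/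
open Filter Metric Set

/-- `(X,d)` is a geodesic space: any two points are joined by an isometric
parametrization of an interval of length `dist x y`. -/
def IsGeodesicSpace (X : Type*) [MetricSpace X] : Prop :=
  ∀ x y : X, ∃ γ : ℝ → X, γ 0 = x ∧ γ (dist x y) = y ∧
    ∀ s ∈ Set.Icc (0 : ℝ) (dist x y), ∀ t ∈ Set.Icc (0 : ℝ) (dist x y),
      dist (γ s) (γ t) = |s - t|

/-- The Lipschitz constant of `u` on a set `K`:
`Lip(u, K) = sup_{x ≠ y ∈ K} |u x - u y| / d(x,y)`. -/
noncomputable def lipOn {X : Type*} [MetricSpace X] (u : X → ℝ) (K : Set X) : ℝ :=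
  sSup { r : ℝ | ∃ x ∈ K, ∃ y ∈ K, x ≠ y ∧ r = |u x - u y| / dist x y }

/-- The pointwise Lipschitz constant
`Lip u (x) = limsup_{y → x} |u y - u x| / d(x,y)`. -/
noncomputable def ptLip {X : Type*} [MetricSpace X] (u : X → ℝ) (x : X) : ℝ :=
  Filter.limsup (fun y => |u y - u x| / dist x y) (nhdsWithin x {x}ᶜ)

open Topology

/-!
Let `L = Lip(u, ∂V)`. On a geodesic segment `σ` running inside `V`, the pointwise bound
`Lip u ≤ L` integrates, by a one-dimensional mean-value argument, to
`|u (σ b) - u (σ a)| ≤ L (b - a)`. For `x, y ∈ V`, follow a geodesic from `x` to `y` up to its first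
exit point `p ∈ ∂V`, then a geodesic from `y` to `p` up to its first exit point `q ∈ ∂V`; on the
middle piece `p`–`q` the definition of `L` applies, and the three lengths add up to `d(x, y)`.
The reverse inequality holds because `u` is continuous on `closure V ⊇ ∂V`.
-/

section LipOn

variable {X : Type*} [MetricSpace X] {u : X → ℝ} {K : Set X}

lemma lipOn_nonneg (u : X → ℝ) (K : Set X) : 0 ≤ lipOn u K :=
  Real.sSup_nonneg <| by
    rintro r ⟨x, -, y, -, -, rfl⟩
    positivity

lemma lipOn_le {L : ℝ} (hL : 0 ≤ L) (h : ∀ x ∈ K, ∀ y ∈ K, |u x - u y| ≤ L * dist x y) :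
    lipOn u K ≤ L :=
  Real.sSup_le (by
    rintro r ⟨x, hx, y, hy, -, rfl⟩
    exact div_le_of_le_mul₀ dist_nonneg hL (h x hx y hy)) hL

lemma LipschitzOnWith.abs_sub_le_lipOn_mul {C : NNReal} (hu : LipschitzOnWith C u K) {x y : X}
    (hx : x ∈ K) (hy : y ∈ K) : |u x - u y| ≤ lipOn u K * dist x y := by
  rcases eq_or_ne x y with rfl | hxy
  · simp
  have hbdd : BddAbove {r : ℝ | ∃ x ∈ K, ∃ y ∈ K, x ≠ y ∧ r = |u x - u y| / dist x y} := by
    refine ⟨C, ?_⟩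
    rintro r ⟨x, hx, y, hy, -, rfl⟩
    exact div_le_of_le_mul₀ dist_nonneg C.2
      (by simpa [Real.dist_eq] using hu.dist_le_mul x hx y hy)
  rw [← div_le_iff₀ (dist_pos.2 hxy)]
  exact le_csSup hbdd ⟨x, hx, y, hy, hxy, rfl⟩

lemma abs_sub_le_mul_dist_of_mem_closure {L : ℝ} (hu : ContinuousOn u (closure K))
    (h : ∀ x ∈ K, ∀ y ∈ K, |u x - u y| ≤ L * dist x y) {x y : X}
    (hx : x ∈ closure K) (hy : y ∈ closure K) : |u x - u y| ≤ L * dist x y := by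
  have hmem : (x, y) ∈ closure (K ×ˢ K) := by
    rw [closure_prod_eq]
    exact ⟨hx, hy⟩
  have hcont : ContinuousOn (fun p : X × X => |u p.1 - u p.2|) (closure (K ×ˢ K)) := by
    rw [closure_prod_eq]
    exact ((hu.comp continuousOn_fst fun p hp => hp.1).sub
      (hu.comp continuousOn_snd fun p hp => hp.2)).abs
  exact le_on_closure (g := fun p : X × X => L * dist p.1 p.2) (fun p hp => h _ hp.1 _ hp.2) hcont
    (continuous_const.mul (continuous_fst.dist continuous_snd)).continuousOn hmem

end LipOn

lemma eventually_abs_sub_lt_of_ptLip_lt {X : Type*} [MetricSpace X] {u : X → ℝ} {C : NNReal}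
    {s : Set X} {p : X} {r : ℝ} (hu : LipschitzOnWith C u s) (hs : s ∈ 𝓝 p)
    (h : ptLip u p < r) : ∀ᶠ z in 𝓝[≠] p, |u z - u p| < r * dist p z := by
  -- without this bound the `limsup` defining `ptLip` is a junk value
  have hbdd : IsBoundedUnder (· ≤ ·) (𝓝[≠] p) (fun z => |u z - u p| / dist p z) := by
    refine ⟨C, eventually_map.2 ?_⟩
    filter_upwards [mem_nhdsWithin_of_mem_nhds hs] with z hz
    exact div_le_of_le_mul₀ dist_nonneg C.2
      (by rw [abs_sub_comm]; simpa [Real.dist_eq] using hu.dist_le_mul p (mem_of_mem_nhds hs) z hz)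
  filter_upwards [eventually_lt_of_limsup_lt h hbdd, self_mem_nhdsWithin] with z hz hzp
  exact (div_lt_iff₀ (dist_pos.2 (Ne.symm hzp))).1 hz

lemma abs_sub_le_mul_of_eventually_right {f : ℝ → ℝ} {a b L : ℝ} (hab : a ≤ b)
    (hf : ContinuousOn f (Icc a b))
    (hloc : ∀ t ∈ Ico a b, ∀ r > L, ∀ᶠ s in 𝓝[>] t, |f s - f t| < r * (s - t)) :
    |f b - f a| ≤ L * (b - a) := by
  refine image_le_of_liminf_slope_right_le_deriv_boundary (f := fun t => |f t - f a|)
    (B := fun t => L * (t - a)) (B' := fun _ => L) (hf.sub continuousOn_const).abs (by simp)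
    (by fun_prop) (fun t _ => ?_) (fun t ht r hr => ?_) ⟨hab, le_rfl⟩
  · simpa using (((hasDerivAt_id t).sub_const a).const_mul L).hasDerivWithinAt
  · refine Eventually.frequently ?_
    filter_upwards [hloc t ht r hr, self_mem_nhdsWithin] with s hs hst
    have hts : 0 < s - t := sub_pos.2 hst
    rw [slope_def_field, div_lt_iff₀ hts]
    have := abs_sub_abs_le_abs_sub (f s - f a) (f t - f a)
    rw [sub_sub_sub_cancel_right] at this
    linarith

section Segment

variable {X : Type*} [MetricSpace X]

lemma continuousOn_of_dist_eq_abs_sub {σ : ℝ → X} {s : Set ℝ}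
    (hσ : ∀ x ∈ s, ∀ y ∈ s, dist (σ x) (σ y) = |x - y|) : ContinuousOn σ s :=
  (LipschitzOnWith.of_dist_le_mul (K := 1) fun x hx y hy => by
    simp [hσ x hx y hy, Real.dist_eq]).continuousOn

lemma abs_sub_le_mul_of_segment {u : X → ℝ} {S : Set X} {L a b : ℝ} {σ : ℝ → X}
    (hab : a ≤ b)
    (hσ : ∀ s ∈ Icc a b, ∀ t ∈ Icc a b, dist (σ s) (σ t) = |s - t|)
    (hu : ContinuousOn (u ∘ σ) (Icc a b)) (hσS : ∀ t ∈ Ico a b, σ t ∈ S)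
    (hloc : ∀ p ∈ S, ∀ r > L, ∀ᶠ z in 𝓝[≠] p, |u z - u p| < r * dist p z) :
    |u (σ b) - u (σ a)| ≤ L * (b - a) := by
  refine abs_sub_le_mul_of_eventually_right hab hu fun t ht r hr => ?_
  obtain ⟨ε, hε, hball⟩ :=
    Metric.eventually_nhds_iff.1 (eventually_nhdsWithin_iff.1 (hloc _ (hσS t ht) r hr))
  filter_upwards [Ioo_mem_nhdsGT (lt_min (lt_add_of_pos_right t hε) ht.2)] with s hs
  have hts : dist (σ s) (σ t) = s - t := by
    rw [hσ s ⟨ht.1.trans hs.1.le, hs.2.le.trans (min_le_right _ _)⟩ t ⟨ht.1, ht.2.le⟩,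
      abs_of_pos (sub_pos.2 hs.1)]
  have hne : σ s ≠ σ t := by
    intro h
    rw [h, dist_self] at hts
    linarith [hs.1]
  have := hball (by rw [hts]; linarith [hs.2.trans_le (min_le_left _ _)]) hne
  rwa [dist_comm, hts] at this

lemma exists_first_exit {σ : ℝ → X} {V : Set X} {a b : ℝ} (hab : a ≤ b)
    (hσ : ContinuousOn σ (Icc a b)) (hV : IsOpen V) (ha : σ a ∈ V) :
    ∃ s ∈ Icc a b, (∀ t ∈ Ico a s, σ t ∈ V) ∧ (s = b ∧ σ b ∈ V ∨ σ s ∈ frontier V) := by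
  set E := Icc a b ∩ σ ⁻¹' Vᶜ
  rcases E.eq_empty_or_nonempty with hE | hE
  · have hin : ∀ t ∈ Icc a b, σ t ∈ V := fun t ht =>
      not_not.1 fun h => (eq_empty_iff_forall_notMem.1 hE) t ⟨ht, h⟩
    exact ⟨b, ⟨hab, le_rfl⟩, fun t ht => hin t ⟨ht.1, ht.2.le⟩,
      Or.inl ⟨rfl, hin b ⟨hab, le_rfl⟩⟩⟩
  have hEb : BddBelow E := ⟨a, fun t ht => ht.1.1⟩
  obtain ⟨⟨has, hsb⟩, hsV⟩ :=
    (hσ.preimage_isClosed_of_isClosed isClosed_Icc hV.isClosed_compl).csInf_mem hE hEb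
  set s := sInf E
  have hbefore : ∀ t ∈ Ico a s, σ t ∈ V := fun t ht =>
    not_not.1 fun h => (csInf_le hEb ⟨⟨ht.1, ht.2.le.trans hsb⟩, h⟩).not_gt ht.2
  have has' : a < s := has.lt_of_ne fun h => hsV (h ▸ ha)
  have hcl : σ s ∈ closure V :=
    ((hσ s ⟨has, hsb⟩).mono (Ico_subset_Icc_self.trans (Icc_subset_Icc_right hsb))).mem_closure
      (by rw [closure_Ico has'.ne]; exact ⟨has, le_rfl⟩) hbefore
  exact ⟨s, ⟨has, hsb⟩, hbefore, Or.inr (hV.frontier_eq ▸ ⟨hcl, hsV⟩)⟩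

end Segment

section Geodesic

variable {X : Type*} [MetricSpace X] {u : X → ℝ} {V : Set X} {L : ℝ}

lemma abs_sub_le_mul_dist_trans {x p y : X} (hxp : |u x - u p| ≤ L * dist x p)
    (hpy : |u p - u y| ≤ L * dist p y) (h : dist x p + dist p y = dist x y) :
    |u x - u y| ≤ L * dist x y :=
  calc |u x - u y| ≤ |u x - u p| + |u p - u y| := abs_sub_le _ _ _
    _ ≤ L * dist x p + L * dist p y := add_le_add hxp hpy
    _ = L * dist x y := by rw [← mul_add, h]

variable (hgeo : IsGeodesicSpace X) (hV : IsOpen V) (hu : ContinuousOn u (closure V))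
  (hloc : ∀ p ∈ V, ∀ r > L, ∀ᶠ z in 𝓝[≠] p, |u z - u p| < r * dist p z)
include hgeo hV hu hloc

lemma exists_eq_or_mem_frontier_of_geodesic {x : X} (hx : x ∈ V) (y : X) :
    ∃ p, |u x - u p| ≤ L * dist x p ∧ dist x p + dist p y = dist x y ∧
      (p = y ∨ p ∈ frontier V) := by
  obtain ⟨γ, hγ0, hγD, hγ⟩ := hgeo x y
  have hγc := continuousOn_of_dist_eq_abs_sub hγ
  obtain ⟨s, hs, hbefore, hend⟩ := exists_first_exit dist_nonneg hγc hV (hγ0 ▸ hx)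
  have hsub : Icc 0 s ⊆ Icc 0 (dist x y) := Icc_subset_Icc_right hs.2
  have hγs : γ s ∈ closure V := by
    rcases hend with ⟨rfl, hmem⟩ | hfr
    · exact subset_closure hmem
    · exact frontier_subset_closure hfr
  have hcl : MapsTo γ (Icc 0 s) (closure V) := fun t ht =>
    ht.2.eq_or_lt.elim (fun h => h ▸ hγs) fun h => subset_closure (hbefore t ⟨ht.1, h⟩)
  have hseg := abs_sub_le_mul_of_segment hs.1 (fun a ha b hb => hγ a (hsub ha) b (hsub hb))
    (hu.comp (hγc.mono hsub) hcl) hbefore hloc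
  have hxs : dist x (γ s) = s := by
    rw [← hγ0, hγ 0 ⟨le_rfl, dist_nonneg⟩ s hs, zero_sub, abs_neg, abs_of_nonneg hs.1]
  have hsy : dist (γ s) y = dist x y - s := by
    conv_lhs => rw [← hγD]
    rw [hγ s hs _ ⟨dist_nonneg, le_rfl⟩, abs_sub_comm, abs_of_nonneg (sub_nonneg.2 hs.2)]
  refine ⟨γ s, ?_, by rw [hxs, hsy]; ring, hend.imp (fun h : s = dist x y ∧ _ => h.1 ▸ hγD) id⟩
  rw [hxs, abs_sub_comm, ← hγ0]
  simpa using hseg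

variable (hfr : ∀ p ∈ frontier V, ∀ q ∈ frontier V, |u p - u q| ≤ L * dist p q)
include hfr

lemma abs_sub_le_mul_dist_of_mem_frontier {x y : X} (hx : x ∈ V) (hy : y ∈ frontier V) :
    |u x - u y| ≤ L * dist x y := by
  obtain ⟨p, hxp, hdist, rfl | hp⟩ := exists_eq_or_mem_frontier_of_geodesic hgeo hV hu hloc hx y
  · exact hxp
  · exact abs_sub_le_mul_dist_trans hxp (hfr p hp y hy) hdist

lemma abs_sub_le_mul_dist_of_mem {x y : X} (hx : x ∈ V) (hy : y ∈ V) :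
    |u x - u y| ≤ L * dist x y := by
  obtain ⟨p, hxp, hdist, rfl | hp⟩ := exists_eq_or_mem_frontier_of_geodesic hgeo hV hu hloc hx y
  · exact hxp
  · refine abs_sub_le_mul_dist_trans hxp ?_ hdist
    rw [abs_sub_comm, dist_comm]
    exact abs_sub_le_mul_dist_of_mem_frontier hgeo hV hu hloc hfr hy hp

end Geodesic

theorem lipOn_eq_lipOn_frontier_general {X : Type*} [MetricSpace X]
    (hgeo : IsGeodesicSpace X)
    (U : Set X) (hUo : IsOpen U)
    (u : X → ℝ) (hc : ContinuousOn u (closure U))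
    (hlip : ∃ K : NNReal, LipschitzOnWith K u U)
    (hmin : ∀ V : Set X, IsOpen V → closure V ⊆ U → IsCompact (closure V) →
      ∀ x ∈ V, ptLip u x ≤ lipOn u (frontier V)) :
    ∀ V : Set X, IsOpen V → closure V ⊆ U → IsCompact (closure V) →
      lipOn u V = lipOn u (frontier V) := by
  intro V hVo hVU hVc
  obtain ⟨K, hK⟩ := hlip
  have hsub : V ⊆ U := subset_closure.trans hVU
  have hu : ContinuousOn u (closure V) := hc.mono (closure_mono hsub)
  have hloc : ∀ p ∈ V, ∀ r > lipOn u (frontier V),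
      ∀ᶠ z in 𝓝[≠] p, |u z - u p| < r * dist p z :=
    fun p hp r hr => eventually_abs_sub_lt_of_ptLip_lt hK (hUo.mem_nhds (hsub hp))
      ((hmin V hVo hVU hVc p hp).trans_lt hr)
  have hfr : ∀ p ∈ frontier V, ∀ q ∈ frontier V,
      |u p - u q| ≤ lipOn u (frontier V) * dist p q :=
    fun p hp q hq => (hK.mono (frontier_subset_closure.trans hVU)).abs_sub_le_lipOn_mul hp hq
  refine le_antisymm (lipOn_le (lipOn_nonneg _ _) fun x hx y hy => ?_)
    (lipOn_le (lipOn_nonneg _ _) fun x hx y hy => ?_)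
  · exact abs_sub_le_mul_dist_of_mem hgeo hVo hu hloc hfr hx hy
  · exact abs_sub_le_mul_dist_of_mem_closure hu
      (fun x hx y hy => (hK.mono hsub).abs_sub_le_lipOn_mul hx hy)
      (frontier_subset_closure hx) (frontier_subset_closure hy)

/-- In a geodesic space, if `u` is continuous on the closure of a bounded open set
`U`, Lipschitz on `U`, and satisfies `sup_{x ∈ V} Lip u (x) ≤ Lip(u, ∂V)` for every
open `V` compactly contained in `U`, then `Lip(u, V) = Lip(u, ∂V)` for every open
`V` compactly contained in `U`. -/
theorem lipOn_eq_lipOn_frontier {X : Type*} [MetricSpace X]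
    (hgeo : IsGeodesicSpace X)
    (U : Set X) (hUo : IsOpen U) (hUb : Bornology.IsBounded U)
    (u : X → ℝ) (hc : ContinuousOn u (closure U))
    (hlip : ∃ K : NNReal, LipschitzOnWith K u U)
    (hmin : ∀ V : Set X, IsOpen V → closure V ⊆ U → IsCompact (closure V) →
      ∀ x ∈ V, ptLip u x ≤ lipOn u (frontier V)) :
    ∀ V : Set X, IsOpen V → closure V ⊆ U → IsCompact (closure V) →
      lipOn u V = lipOn u (frontier V) :=
  lipOn_eq_lipOn_frontier_general hgeo U hUo u hc hlip hmin
end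

section
/- Let (X,d) be a geodesic metric space and U ⊂ X open. Suppose u ∈ Lip(U) satisfies Lip_d(u, W) = Lip_d(u, ∂W) for every open W compactly contained in U. Then u satisfies the comparison with cones property from above: for every open V compactly contained in U, every a ≥ 0, b ∈ ℝ, and x₀ ∈ X ∖ V, if u(x) ≤ b + a·d(x,x₀) for all x ∈ ∂V, then u(x) ≤ b + a·d(x,x₀) for all x ∈ V. -/
open Filter Metric Set
open Topology

/-- In a geodesic space, if `u` is Lipschitz on the open set `U` and satisfies
`Lip(u, W) = Lip(u, ∂W)` for every open `W` compactly contained in `U`, then `u`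
enjoys comparison with cones from above: for every open `V` compactly contained in
`U`, every `a ≥ 0`, `b ∈ ℝ` and `x₀ ∉ V`, if `u ≤ b + a·d(·,x₀)` on `∂V` then
`u ≤ b + a·d(·,x₀)` on `V`. -/
theorem comparison_with_cones_from_above {X : Type*} [MetricSpace X]
    (hgeo : IsGeodesicSpace X)
    (U : Set X) (hUo : IsOpen U)
    (u : X → ℝ) (hlip : ∃ K : NNReal, LipschitzOnWith K u U)
    (hmin : ∀ W : Set X, IsOpen W → closure W ⊆ U → IsCompact (closure W) →
      lipOn u W = lipOn u (frontier W)) :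
    ∀ V : Set X, IsOpen V → closure V ⊆ U → IsCompact (closure V) →
      ∀ a : ℝ, 0 ≤ a → ∀ b : ℝ, ∀ x₀ : X, x₀ ∉ V →
        (∀ x ∈ frontier V, u x ≤ b + a * dist x x₀) →
        ∀ x ∈ V, u x ≤ b + a * dist x x₀ := by
  intro V hVo hVU hVc a ha b x₀ hx₀ hbd x hxV
  by_contra hcon
  push_neg at hcon
  obtain ⟨K, hK⟩ := hlip
  set C : X → ℝ := fun y => b + a * dist y x₀ with hCdef
  have hVsubU : V ⊆ U := subset_closure.trans hVU
  have hcontU : ContinuousOn u U := hK.continuousOn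
  have hCc : Continuous C := by
    continuity
  set W : Set X := V ∩ (fun y => u y - C y) ⁻¹' Ioi 0 with hWdef
  have hWo : IsOpen W := by
    apply ContinuousOn.isOpen_inter_preimage _ hVo isOpen_Ioi
    exact (hcontU.mono hVsubU).sub hCc.continuousOn
  have hWV : W ⊆ V := inter_subset_left
  have hWU : W ⊆ U := hWV.trans hVsubU
  have hclWV : closure W ⊆ closure V := closure_mono hWV
  have hclWU : closure W ⊆ U := hclWV.trans hVU
  have hWc : IsCompact (closure W) := hVc.of_isClosed_subset isClosed_closure hclWV
  have hxW : x ∈ W := ⟨hxV, by simpa [hWdef] using sub_pos.mpr hcon⟩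
  have hx₀W : x₀ ∉ W := fun h => hx₀ (hWV h)
  -- u ≥ C on closure W
  have hclW_ge : ∀ z ∈ closure W, C z ≤ u z := by
    intro z hz
    haveI : (𝓝[W] z).NeBot := mem_closure_iff_nhdsWithin_neBot.mp hz
    have h1 : Tendsto u (𝓝[W] z) (𝓝 (u z)) :=
      (hcontU z (hclWU hz)).mono_left (nhdsWithin_mono z hWU)
    have h2 : Tendsto C (𝓝[W] z) (𝓝 (C z)) :=
      (hCc.tendsto z).mono_left nhdsWithin_le_nhds
    refine le_of_tendsto_of_tendsto h2 h1 ?_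
    filter_upwards [self_mem_nhdsWithin] with w hw
    have : 0 < u w - C w := hw.2
    linarith
  -- u ≤ C on frontier W, hence u = C there
  have hfr : ∀ z ∈ frontier W, u z = C z := by
    intro z hz
    have hzcl : z ∈ closure W := hz.1
    have hznW : z ∉ W := by
      intro h; exact hz.2 (by rwa [hWo.interior_eq])
    refine le_antisymm ?_ (hclW_ge z hzcl)
    by_cases hzV : z ∈ V
    · by_contra hlt
      push_neg at hlt
      exact hznW ⟨hzV, sub_pos.mpr hlt⟩
    · exact hbd z ⟨hclWV hzcl, fun h => hzV (hVo.interior_eq ▸ h)⟩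
  -- lipOn u (frontier W) ≤ a
  have hfrle : lipOn u (frontier W) ≤ a := by
    apply Real.sSup_le _ ha
    rintro r ⟨p, hp, q, hq, hpq, rfl⟩
    rw [div_le_iff₀ (dist_pos.mpr hpq)]
    rw [hfr p hp, hfr q hq]
    have : C p - C q = a * (dist p x₀ - dist q x₀) := by ring
    rw [this, abs_mul, abs_of_nonneg ha]
    have := abs_dist_sub_le p q x₀
    nlinarith [abs_nonneg (dist p x₀ - dist q x₀), dist_nonneg (x := p) (y := q)]
  -- u is a-Lipschitz on W
  have hWlip : ∀ p ∈ W, ∀ q ∈ W, |u p - u q| ≤ a * dist p q := by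
    intro p hp q hq
    rcases eq_or_ne p q with rfl | hpq
    · simp [mul_nonneg ha dist_nonneg]
    have hd : (0:ℝ) < dist p q := dist_pos.mpr hpq
    have hbdd : BddAbove { r : ℝ | ∃ x ∈ W, ∃ y ∈ W, x ≠ y ∧ r = |u x - u y| / dist x y } := by
      refine ⟨K, ?_⟩
      rintro r ⟨p', hp', q', hq', hpq', rfl⟩
      rw [div_le_iff₀ (dist_pos.mpr hpq')]
      have := hK.dist_le_mul p' (hWU hp') q' (hWU hq')
      rwa [Real.dist_eq] at this
    have hmem : |u p - u q| / dist p q ∈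
        { r : ℝ | ∃ x ∈ W, ∃ y ∈ W, x ≠ y ∧ r = |u x - u y| / dist x y } :=
      ⟨p, hp, q, hq, hpq, rfl⟩
    have h1 : |u p - u q| / dist p q ≤ lipOn u W := le_csSup hbdd hmem
    rw [hmin W hWo hclWU hWc] at h1
    have := h1.trans hfrle
    rwa [div_le_iff₀ hd] at this
  -- extension: for z ∈ closure W, u x - u z ≤ a * dist x z
  have hext : ∀ z ∈ closure W, u x - u z ≤ a * dist x z := by
    intro z hz
    haveI : (𝓝[W] z).NeBot := mem_closure_iff_nhdsWithin_neBot.mp hz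
    have h1 : Tendsto (fun w => u x - u w) (𝓝[W] z) (𝓝 (u x - u z)) :=
      tendsto_const_nhds.sub ((hcontU z (hclWU hz)).mono_left (nhdsWithin_mono z hWU))
    have h2 : Tendsto (fun w => a * dist x w) (𝓝[W] z) (𝓝 (a * dist x z)) :=
      ((continuous_const.mul (continuous_const.dist continuous_id)).tendsto z).mono_left
        nhdsWithin_le_nhds
    refine le_of_tendsto_of_tendsto h1 h2 ?_
    filter_upwards [self_mem_nhdsWithin] with w hw
    have := hWlip x hxW w hw
    have := abs_le.mp this
    linarith [this.2]
  -- geodesic from x to x₀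
  obtain ⟨γ, hγ0, hγD, hγiso⟩ := hgeo x x₀
  set D : ℝ := dist x x₀ with hDdef
  have hD0 : 0 ≤ D := dist_nonneg
  have hγlip : LipschitzOnWith 1 γ (Icc 0 D) := by
    apply LipschitzOnWith.of_dist_le_mul
    intro s hs t ht
    rw [hγiso s hs t ht, Real.dist_eq]; simp
  set S : Set ℝ := Icc 0 D ∩ γ ⁻¹' Wᶜ with hSdef
  have hScl : IsClosed S :=
    hγlip.continuousOn.preimage_isClosed_of_isClosed isClosed_Icc hWo.isClosed_compl
  have hDS : D ∈ S := ⟨⟨hD0, le_refl D⟩, by simpa [hγD] using hx₀W⟩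
  have hSne : S.Nonempty := ⟨D, hDS⟩
  have hSbdd : BddBelow S := ⟨0, fun t ht => ht.1.1⟩
  set t₀ : ℝ := sInf S with ht₀def
  have ht₀S : t₀ ∈ S := hScl.csInf_mem hSne hSbdd
  have ht₀Icc : t₀ ∈ Icc 0 D := ht₀S.1
  have hγt₀ : γ t₀ ∉ W := ht₀S.2
  have ht₀pos : 0 < t₀ := by
    rcases lt_or_eq_of_le ht₀Icc.1 with h | h
    · exact h
    · exfalso; apply hγt₀; rw [← h, hγ0]; exact hxW
  set z : X := γ t₀ with hzdef
  -- below t₀ the geodesic is in W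
  have hbelow : ∀ t, 0 ≤ t → t < t₀ → γ t ∈ W := by
    intro t ht0 htlt
    by_contra hne
    have : t ∈ S := ⟨⟨ht0, le_trans htlt.le ht₀Icc.2⟩, hne⟩
    exact absurd (csInf_le hSbdd this) (not_le.mpr htlt)
  -- z ∈ closure W
  have hzcl : z ∈ closure W := by
    rw [Metric.mem_closure_iff]
    intro ε hε
    set t : ℝ := t₀ - min ε t₀ / 2 with htdef
    have hmin' : 0 < min ε t₀ := lt_min hε ht₀pos
    have ht0 : 0 ≤ t := by
      have : min ε t₀ ≤ t₀ := min_le_right _ _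
      simp only [htdef]; linarith
    have htlt : t < t₀ := by simp only [htdef]; linarith
    refine ⟨γ t, hbelow t ht0 htlt, ?_⟩
    have : dist z (γ t) = |t₀ - t| :=
      hγiso t₀ ht₀Icc t ⟨ht0, le_trans htlt.le ht₀Icc.2⟩
    rw [this, abs_of_nonneg (by linarith)]
    have : min ε t₀ ≤ ε := min_le_left _ _
    simp only [htdef]; linarith
  have hdxz : dist x z = t₀ := by
    have := hγiso 0 ⟨le_refl 0, hD0⟩ t₀ ht₀Icc
    rw [hγ0] at this
    rw [this, abs_of_nonpos (by linarith)]
    ring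
  have hdzx₀ : dist z x₀ = D - t₀ := by
    have := hγiso t₀ ht₀Icc D ⟨hD0, le_refl D⟩
    rw [hγD] at this
    rw [this, abs_of_nonpos (by linarith [ht₀Icc.2])]
    ring
  -- z is on the frontier of W
  have hzfr : z ∈ frontier W := ⟨hzcl, by rwa [hWo.interior_eq]⟩
  have huz : u z = C z := hfr z hzfr
  have h1 : u x - u z ≤ a * dist x z := hext z hzcl
  have : u x ≤ C z + a * dist x z := by rw [← huz]; linarith
  rw [hCdef] at this
  simp only at this
  rw [hdzx₀, hdxz] at this
  have : u x ≤ b + a * D := by linarith [this]; 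
  exact absurd this (not_le.mpr (by rw [hDdef] at *; exact hcon))
end
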